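/- For the Cantor-set stack encoding, if v = Σ_{i=1}^t a_i/4^i with a_i ∈ {1,3} and t ≥ 1, then σ(4v − 2) equals 1 if a_1 = 3 and 0 if a_1 = 1, where σ is the saturated linear sigmoid. -/

import Mathlib

/-- The saturated linear sigmoid. -/
def satSig (x : ℚ) : ℚ := min (max x 0) 1

/-- Cantor-set encoding of a stack of base-4 digits (top of stack first). -/
def stackEnc : List ℚ → ℚ
  | [] => 0
  | a :: s => a / 4 + stackEnc s / 4

/-! Shifting the encoding one base-4 place exposes the top digit, `4 v - 2 = (a - 2) + v'` where
`v' ∈ [0, 1)` encodes the rest of the stack; so the argument of `σ` is `≤ 0` when `a = 1` and `≥ 1`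
when `a = 3`, and the sigmoid saturates in both cases. -/

lemma satSig_of_nonpos {x : ℚ} (hx : x ≤ 0) : satSig x = 0 := by
  simp [satSig, max_eq_right hx]

lemma satSig_of_one_le {x : ℚ} (hx : 1 ≤ x) : satSig x = 1 := by
  simp [satSig, max_eq_left (zero_le_one.trans hx), hx]

lemma four_mul_stackEnc_cons (a : ℚ) (s : List ℚ) : 4 * stackEnc (a :: s) = a + stackEnc s := by
  simp only [stackEnc]
  ring

lemma stackEnc_mem_Ico {s : List ℚ} (hs : ∀ x ∈ s, 0 ≤ x ∧ x ≤ 3) : stackEnc s ∈ Set.Ico 0 1 := by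
  induction s with
  | nil => simp [stackEnc]
  | cons a t ih =>
    obtain ⟨ht0, ht1⟩ := ih fun x hx => hs x (List.mem_cons_of_mem _ hx)
    obtain ⟨ha0, ha3⟩ := hs a List.mem_cons_self
    simp only [stackEnc, Set.mem_Ico]
    constructor <;> linarith

theorem top_stackEnc (a : ℚ) (s : List ℚ)
    (hdig : ∀ x ∈ a :: s, x = 1 ∨ x = 3) :
    satSig (4 * stackEnc (a :: s) - 2) = if a = 3 then 1 else 0 := by
  obtain ⟨hrest0, hrest1⟩ : stackEnc s ∈ Set.Ico 0 1 := stackEnc_mem_Ico fun x hx => by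
    rcases hdig x (List.mem_cons_of_mem _ hx) with rfl | rfl <;> norm_num
  rw [four_mul_stackEnc_cons]
  rcases hdig a List.mem_cons_self with rfl | rfl
  · rw [satSig_of_nonpos (by linarith), if_neg (by norm_num)]
  · rw [satSig_of_one_le (by linarith), if_pos rfl]
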